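/- arXiv:2002.11403 — 4 statements merged into one kernel-verified Lean document; each statement's English description precedes it below -/
import Mathlib

section
/- For every r ≥ 4 there exist n ∈ ℕ and an antipodal partial cube S ⊆ (Fin n → Bool) of isometric dimension n such that the rank of S equals r and the minimum degree of S equals 4 (every vertex of S has degree at least 4 and some vertex has degree exactly 4). -/
open scoped Classical

namespace PartialCubesPaper

noncomputable section

/-- Flip coordinate `e` of a vertex of the hypercube. -/
def flipC {n : ℕ} (e : Fin n) (v : Fin n → Bool) : Fin n → Bool :=
  Function.update v e (!(v e))

/-- Coordinatewise negation (the antipode in the hypercube). -/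
def negV {n : ℕ} (v : Fin n → Bool) : Fin n → Bool := fun i => !(v i)

/-- `S` is a partial cube: it is nonempty and any two of its vertices are joined,
inside `S`, by a path of hypercube-edges whose length is the Hamming distance
(equivalently, the induced subgraph of `Q_n` on `S` is connected and its graph
distance coincides with the Hamming distance). -/
def IsPartialCube {n : ℕ} (S : Set (Fin n → Bool)) : Prop :=
  S.Nonempty ∧ ∀ u ∈ S, ∀ v ∈ S, ∃ w : ℕ → (Fin n → Bool),
    w 0 = u ∧ w (hammingDist u v) = v ∧
    (∀ k, k ≤ hammingDist u v → w k ∈ S) ∧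
    (∀ k, k < hammingDist u v → hammingDist (w k) (w (k + 1)) = 1)

/-- Coordinate `e` is non-constant on `T`. -/
def NonConst {n : ℕ} (T : Set (Fin n → Bool)) (e : Fin n) : Prop :=
  ∃ u ∈ T, ∃ v ∈ T, u e ≠ v e

/-- `S ⊆ (Fin n → Bool)` has isometric dimension `n`: no coordinate is constant on `S`. -/
def FullIsoDim {n : ℕ} (S : Set (Fin n → Bool)) : Prop := ∀ e, NonConst S e

/-- `S` is antipodal: full isometric dimension and closed under taking antipodes. -/
def IsAntipodal {n : ℕ} (S : Set (Fin n → Bool)) : Prop :=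
  FullIsoDim S ∧ ∀ v ∈ S, negV v ∈ S

/-- The Θ-class `E_e` crosses `T`. -/
def Crosses {n : ℕ} (e : Fin n) (T : Set (Fin n → Bool)) : Prop :=
  ∃ v ∈ T, flipC e v ∈ T

/-- Degree of `v` in (the subgraph of `Q_n` induced on) `S`. -/
def degree {n : ℕ} (S : Set (Fin n → Bool)) (v : Fin n → Bool) : ℕ :=
  (Finset.univ.filter fun e => flipC e v ∈ S).card

/-- The family of sets `{i | v i = true}`, `v ∈ S`, shatters the finite set `F`. -/
def Shatters {n : ℕ} (S : Set (Fin n → Bool)) (F : Finset (Fin n)) : Prop :=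
  ∀ g : Fin n → Bool, ∃ v ∈ S, ∀ i ∈ F, v i = g i

/-- `S` has rank (VC dimension) `r`. -/
def IsRank {n : ℕ} (S : Set (Fin n → Bool)) (r : ℕ) : Prop :=
  (∃ F : Finset (Fin n), F.card = r ∧ Shatters S F) ∧
  ∀ F : Finset (Fin n), Shatters S F → F.card ≤ r

/-- `T` is convex in `S`. -/
def ConvexIn {n : ℕ} (S T : Set (Fin n → Bool)) : Prop :=
  T ⊆ S ∧ ∀ u ∈ T, ∀ v ∈ T, ∀ w ∈ S,
    hammingDist u w + hammingDist w v = hammingDist u v → w ∈ T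

/-- `T` is gated in `S`. -/
def GatedIn {n : ℕ} (S T : Set (Fin n → Bool)) : Prop :=
  ∀ x ∈ S, ∃ g ∈ T, ∀ u ∈ T, hammingDist x u = hammingDist x g + hammingDist g u

/-- Negate exactly the coordinates that are non-constant on `T`. -/
def negOn {n : ℕ} (T : Set (Fin n → Bool)) (v : Fin n → Bool) : Fin n → Bool :=
  fun i => if NonConst T i then !(v i) else v i

/-- `T` is an antipodal subgraph of `S`: a convex subset closed under
negating the coordinates non-constant on `T`. -/
def IsAntipSub {n : ℕ} (S T : Set (Fin n → Bool)) : Prop :=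
  ConvexIn S T ∧ ∀ v ∈ T, negOn T v ∈ T

/-- A COM: a partial cube all of whose antipodal subgraphs are gated. -/
def IsCOM {n : ℕ} (S : Set (Fin n → Bool)) : Prop :=
  IsPartialCube S ∧ ∀ T, IsAntipSub S T → GatedIn S T

/-- An OM: an antipodal partial cube all of whose antipodal subgraphs are gated. -/
def IsOM {n : ℕ} (S : Set (Fin n → Bool)) : Prop :=
  IsPartialCube S ∧ IsAntipodal S ∧ ∀ T, IsAntipSub S T → GatedIn S T

/-- `T` is a subcube of `S`: convex, and every assignment of values to the
coordinates non-constant on `T` is realized by some vertex of `T`. -/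
def IsSubcube {n : ℕ} (S T : Set (Fin n → Bool)) : Prop :=
  ConvexIn S T ∧ ∀ g : Fin n → Bool, ∃ v ∈ T, ∀ i, NonConst T i → v i = g i

/-- A UOM: an antipodal partial cube all of whose proper antipodal subgraphs are subcubes. -/
def IsUOM {n : ℕ} (S : Set (Fin n → Bool)) : Prop :=
  IsPartialCube S ∧ IsAntipodal S ∧ ∀ T, IsAntipSub S T → T ≠ S → IsSubcube S T

/-- A LOP: a partial cube all of whose antipodal subgraphs are subcubes. -/
def IsLOP {n : ℕ} (S : Set (Fin n → Bool)) : Prop :=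
  IsPartialCube S ∧ ∀ T, IsAntipSub S T → IsSubcube S T

/-- Inclusion-maximal antipodal subgraph. -/
def MaxAntipSub {n : ℕ} (S H : Set (Fin n → Bool)) : Prop :=
  IsAntipSub S H ∧ ∀ H', IsAntipSub S H' → H ⊆ H' → H' = H

/-- Inclusion-maximal proper antipodal subgraph. -/
def MaxProperAntipSub {n : ℕ} (S H : Set (Fin n → Bool)) : Prop :=
  IsAntipSub S H ∧ H ≠ S ∧ ∀ H', IsAntipSub S H' → H' ≠ S → H ⊆ H' → H' = H

/-- For a simplicial vertex `v` of a UOM `S`: `v` with all coordinates `e`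
such that `flip_e v ∈ S` negated. -/
def vstar {n : ℕ} (S : Set (Fin n → Bool)) (v : Fin n → Bool) : Fin n → Bool :=
  fun i => if flipC i v ∈ S then !(v i) else v i

/-- The mutation of `S` at `v`. -/
def mutate {n : ℕ} (S : Set (Fin n → Bool)) (v : Fin n → Bool) : Set (Fin n → Bool) :=
  (S \ {v, negV v}) ∪ {vstar S v, negV (vstar S v)}

/-- One mutation step: `S'` is the mutation of `S` at some simplicial vertex of `S`
(a vertex whose degree equals the rank of `S`). -/
def MutStep {n : ℕ} (S S' : Set (Fin n → Bool)) : Prop :=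
  ∃ r, IsRank S r ∧ ∃ v ∈ S, degree S v = r ∧ S' = mutate S v

/-- `S'` is a reorientation of `S`. -/
def Reorient {n : ℕ} (S S' : Set (Fin n → Bool)) : Prop :=
  ∃ z : Fin n → Bool, S' = (fun x => fun i => xor (x i) (z i)) '' S

/-- `S'` is isomorphic to `S` (as an embedded system: permute coordinates and reorient). -/
def IsomEquiv {n : ℕ} (S S' : Set (Fin n → Bool)) : Prop :=
  ∃ (σ : Equiv.Perm (Fin n)) (z : Fin n → Bool),
    S' = (fun x => fun i => xor (x (σ i)) (z i)) '' S

/-- The coordinates non-constant on `H`. -/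
def nonconstCoords {n : ℕ} (H : Set (Fin n → Bool)) : Finset (Fin n) :=
  Finset.univ.filter fun e => NonConst H e

/-- Image of `H` under deleting the coordinates constant on `H`. -/
def delConst {n : ℕ} (H : Set (Fin n → Bool)) :
    Set (Fin (nonconstCoords H).card → Bool) :=
  (fun v => fun j => v (((nonconstCoords H).orderIsoOfFin rfl j).1)) '' H

/-- `H` is an OM up to constant coordinates. -/
def IsOMConst {n : ℕ} (H : Set (Fin n → Bool)) : Prop := IsOM (delConst H)

/-- Lift: elements of `T` extended by `true` in a new last coordinate, together with
elements of `U` extended by `false`. -/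
def liftSet {n : ℕ} (T U : Set (Fin n → Bool)) : Set (Fin (n + 1) → Bool) :=
  (fun v => Fin.snoc v true) '' T ∪ (fun v => Fin.snoc v false) '' U

/-- `T` is a chunk of `H` (where `H` is an OM up to constant coordinates). -/
def IsChunk {n : ℕ} (H T : Set (Fin n → Bool)) : Prop :=
  IsOMConst H ∧ T ⊆ H ∧
  ((∃ a b, a ≠ b ∧ H = {a, b} ∧ ∃ c, T = {c}) ∨
    (T ∪ negOn H '' T = H ∧
     IsOMConst (liftSet T (negOn H '' T)) ∧
     ∀ A, MaxProperAntipSub H A →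
       A ⊆ T \ negOn H '' T ∨ A ⊆ (negOn H '' T) \ T))

/-- `C` is a corner of the OM (up to constant coordinates) `H`. -/
def IsCornerOfOM {n : ℕ} (H C : Set (Fin n → Bool)) : Prop :=
  (∃ v, H = {v} ∧ C = H) ∨ (∃ T, IsChunk H T ∧ C = H \ T)

/-- `C` is a corner of the partial cube `S`: there is exactly one inclusion-maximal
antipodal subgraph `H` of `S` containing `C`, and `C` is a corner of `H`. -/
def IsCorner {n : ℕ} (S C : Set (Fin n → Bool)) : Prop :=
  C ⊆ S ∧ ∃ H, MaxAntipSub S H ∧ C ⊆ H ∧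
    (∀ H', MaxAntipSub S H' → C ⊆ H' → H' = H) ∧ IsCornerOfOM H C

/-- A corner peeling of `S`. -/
def HasCornerPeeling {n : ℕ} (S : Set (Fin n → Bool)) : Prop :=
  ∃ (k : ℕ) (Cs : Fin k → Set (Fin n → Bool)),
    (∀ i, (Cs i).Nonempty) ∧
    (∀ i j, i ≠ j → Disjoint (Cs i) (Cs j)) ∧
    (⋃ i, Cs i) = S ∧
    ∀ i, IsCorner (S \ ⋃ j, ⋃ (_ : j < i), Cs j) (Cs i)

/-- A cocircuit of the OM `S` of rank `r`: an antipodal subgraph of rank `r - 1`. -/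
def Cocircuit {n : ℕ} (S : Set (Fin n → Bool)) (r : ℕ) (A : Set (Fin n → Bool)) : Prop :=
  IsAntipSub S A ∧ IsRank A (r - 1)

/-- Adjacency in the cocircuit graph of the OM `S` of rank `r`. -/
def CocAdj {n : ℕ} (S : Set (Fin n → Bool)) (r : ℕ) (A B : Set (Fin n → Bool)) : Prop :=
  Cocircuit S r A ∧ Cocircuit S r B ∧ A ≠ B ∧
  IsAntipSub S (A ∩ B) ∧ IsRank (A ∩ B) (r - 2)

/-- The halfspace of `S` along `e` on side `b`. -/
def halfspace {n : ℕ} (S : Set (Fin n → Bool)) (e : Fin n) (b : Bool) :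
    Set (Fin n → Bool) :=
  {v ∈ S | v e = b}

/-- `A 0, …, A m` is a line of the AOM `G` (a halfspace of the rank-`r` OM `S`):
a maximal path in the cocircuit graph of `G` such that consecutive intersections
are antipodal to each other within the middle cocircuit. -/
def IsLine {n : ℕ} (S : Set (Fin n → Bool)) (r : ℕ) (G : Set (Fin n → Bool))
    (m : ℕ) (A : ℕ → Set (Fin n → Bool)) : Prop :=
  1 ≤ m ∧
  (∀ i, i ≤ m → Cocircuit S r (A i) ∧ A i ⊆ G) ∧
  (∀ i, i < m → CocAdj S r (A i) (A (i + 1))) ∧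
  (∀ i j, i ≤ m → j ≤ m → A i = A j → i = j) ∧
  (∀ i, 0 < i → i < m → A (i - 1) ∩ A i = negOn (A i) '' (A i ∩ A (i + 1))) ∧
  (¬ ∃ B, Cocircuit S r B ∧ B ⊆ G ∧ CocAdj S r B (A 0) ∧
      (∀ i, i ≤ m → B ≠ A i) ∧ B ∩ A 0 = negOn (A 0) '' (A 0 ∩ A 1)) ∧
  (¬ ∃ B, Cocircuit S r B ∧ B ⊆ G ∧ CocAdj S r (A m) B ∧
      (∀ i, i ≤ m → B ≠ A i) ∧ A (m - 1) ∩ A m = negOn (A m) '' (A m ∩ B))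

/-- The Θ-class `E_e` crosses the line `A 0, …, A m` at position `i`. -/
def LineCrossAt {n : ℕ} (e : Fin n) (m : ℕ) (A : ℕ → Set (Fin n → Bool)) (i : ℕ) : Prop :=
  i ≤ m ∧ Crosses e (A i) ∧
  ((0 < i ∧ ¬ Crosses e (A (i - 1) ∩ A i)) ∨ (i < m ∧ ¬ Crosses e (A i ∩ A (i + 1))))

def Epos {n : ℕ} (e : Fin n) : Set (Fin n → Bool) := {v | v e = true}
def Eneg {n : ℕ} (e : Fin n) : Set (Fin n → Bool) := {v | v e = false}

/-- Directed edge `A → B` of the orientation of the cocircuit graph of the AOM `G`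
with respect to `E_e`: `A, B` are consecutive on a line crossed by `E_e`, indexed so
that cocircuits before the crossing lie in `E_e^-` and after it in `E_e^+`. -/
def DirEdge {n : ℕ} (S : Set (Fin n → Bool)) (r : ℕ) (G : Set (Fin n → Bool))
    (e : Fin n) (A B : Set (Fin n → Bool)) : Prop :=
  ∃ m P, IsLine S r G m P ∧
    (∃ i, LineCrossAt e m P i ∧ (∀ j, j < i → P j ⊆ Eneg e) ∧
      (∀ j, i < j → j ≤ m → P j ⊆ Epos e)) ∧
    ∃ j, j < m ∧ P j = A ∧ P (j + 1) = B

/-- The orientation of the cocircuit graph of `G` with respect to `E_e` is strictly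
acyclic: every cycle traversing at least one directed edge traverses some directed
edge along its direction and some against it. -/
def StrictlyAcyclic {n : ℕ} (S : Set (Fin n → Bool)) (r : ℕ) (G : Set (Fin n → Bool))
    (e : Fin n) : Prop :=
  ∀ (k : ℕ) (C : ℕ → Set (Fin n → Bool)),
    3 ≤ k →
    (∀ i, i < k → Cocircuit S r (C i) ∧ C i ⊆ G) →
    (∀ i, i < k → CocAdj S r (C i) (C ((i + 1) % k))) →
    (∀ i j, i < k → j < k → C i = C j → i = j) →
    (∃ i, i < k ∧ (DirEdge S r G e (C i) (C ((i + 1) % k)) ∨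
                   DirEdge S r G e (C ((i + 1) % k)) (C i))) →
    (∃ i, i < k ∧ DirEdge S r G e (C i) (C ((i + 1) % k))) ∧
    (∃ i, i < k ∧ DirEdge S r G e (C ((i + 1) % k)) (C i))

/-- The halfspace of the rank-`r` OM `S` along `f` on side `b` is a Euclidean AOM. -/
def IsEuclideanHalf {n : ℕ} (S : Set (Fin n → Bool)) (r : ℕ) (f : Fin n) (b : Bool) : Prop :=
  ∀ e : Fin n, NonConst (halfspace S f b) e → StrictlyAcyclic S r (halfspace S f b) e

/-- `T` defines an expansion of the OM `S` in general position. -/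
def GeneralPosition {n : ℕ} (S : Set (Fin n → Bool)) (T : Set (Fin n → Bool)) : Prop :=
  T ⊆ S ∧ T ∪ negV '' T = S ∧
  IsOM (liftSet T (negV '' T)) ∧
  ∀ A, MaxProperAntipSub S A → A ⊆ T \ negV '' T ∨ A ⊆ (negV '' T) \ T

/-- The OM `S` is Mandel: it has an expansion in general position both of whose
halfspaces along the new coordinate are Euclidean AOMs. -/
def IsMandel {n : ℕ} (S : Set (Fin n → Bool)) : Prop :=
  ∃ T, GeneralPosition S T ∧
    ∀ r', IsRank (liftSet T (negV '' T)) r' →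
      IsEuclideanHalf (liftSet T (negV '' T)) r' (Fin.last n) true ∧
      IsEuclideanHalf (liftSet T (negV '' T)) r' (Fin.last n) false

/-- Adjacency in the cocircuit graph of a non-antipodal COM `S` of rank `r`. -/
def COMCocAdj {n : ℕ} (S : Set (Fin n → Bool)) (r : ℕ) (A B : Set (Fin n → Bool)) : Prop :=
  IsAntipSub S A ∧ IsRank A r ∧ IsAntipSub S B ∧ IsRank B r ∧ A ≠ B ∧
  IsAntipSub S (A ∩ B) ∧ IsRank (A ∩ B) (r - 1)

/-- A COM of rank `r` is pure: all inclusion-maximal antipodal subgraphs have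
rank `r` and the cocircuit graph is connected. -/
def IsPure {n : ℕ} (S : Set (Fin n → Bool)) (r : ℕ) : Prop :=
  (∀ H, MaxAntipSub S H → IsRank H r) ∧
  ∀ A B, IsAntipSub S A → IsRank A r → IsAntipSub S B → IsRank B r →
    Relation.ReflTransGen (COMCocAdj S r) A B

/-- Adjacency in a cycle of length `c` (for `c = 2` this is `K_2`). -/
def cellAdj (c : ℕ) (x y : ZMod c) : Prop := x - y = 1 ∨ y - x = 1

/-- `T` is a cell: a partial cube whose induced graph is isomorphic, as a simple
graph, to a finite Cartesian product of copies of `K_2` and even cycles. -/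
def IsCell {n : ℕ} (T : Set (Fin n → Bool)) : Prop :=
  IsPartialCube T ∧
  ∃ (k : ℕ) (c : Fin k → ℕ),
    (∀ i, c i = 2 ∨ (Even (c i) ∧ 4 ≤ c i)) ∧
    ∃ e : T ≃ ((i : Fin k) → ZMod (c i)),
      ∀ u v : T, hammingDist (u : Fin n → Bool) (v : Fin n → Bool) = 1 ↔
        ∃ j, cellAdj (c j) (e u j) (e v j) ∧ ∀ i, i ≠ j → e u i = e v i

/-- `S` is hypercellular. -/
def IsHypercellular {n : ℕ} (S : Set (Fin n → Bool)) : Prop :=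
  IsPartialCube S ∧
  (∀ T, IsAntipSub S T → IsCell T) ∧
  ∀ k, 2 ≤ k → ∀ X Y Z : Set (Fin n → Bool),
    IsAntipSub S X → IsRank X k → IsAntipSub S Y → IsRank Y k →
    IsAntipSub S Z → IsRank Z k →
    IsAntipSub S (X ∩ Y) → IsRank (X ∩ Y) (k - 1) →
    IsAntipSub S (Y ∩ Z) → IsRank (Y ∩ Z) (k - 1) →
    IsAntipSub S (X ∩ Z) → IsRank (X ∩ Z) (k - 1) →
    IsAntipSub S (X ∩ Y ∩ Z) → IsRank (X ∩ Y ∩ Z) (k - 2) →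
    ∃ W, IsAntipSub S W ∧ X ∪ Y ∪ Z ⊆ W

/-- Delete coordinate `e`. -/
def delCoord {n : ℕ} (e : Fin (n + 1)) (v : Fin (n + 1) → Bool) : Fin n → Bool :=
  fun i => v (e.succAbove i)

/-- `G` is an affine partial cube: the image, under deleting a coordinate, of a
halfspace of an antipodal partial cube. -/
def IsAffine {n : ℕ} (G : Set (Fin n → Bool)) : Prop :=
  ∃ (H : Set (Fin (n + 1) → Bool)) (f : Fin (n + 1)),
    IsPartialCube H ∧ IsAntipodal H ∧ G = delCoord f '' halfspace H f true

/-- The set of antipodes of an affine partial cube `G`. -/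
def antipodes {n : ℕ} (G : Set (Fin n → Bool)) : Set (Fin n → Bool) :=
  {u ∈ G | ∃ w ∈ G, ∀ v ∈ G, hammingDist u v + hammingDist v w = hammingDist u w}

/-! Take `n = r + 1`, a window `W` of four coordinates, and delete from `Q_n` every vertex that
is constant on `W` without being constant. The two constant vertices keep exactly the four
neighbours obtained by flipping a coordinate of `W`. Any other vertex loses at most one neighbour:
if flipping `e₁` and flipping `e₂ ≠ e₁` both made it constant on `W`, a third coordinate of `W`
would force both constants to agree, and then it would already be constant on `W`. The same fact
shows that from any remaining vertex some coordinate on which it differs from a given target can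
be flipped without leaving the set, so geodesics can be built greedily: it is a partial cube. Deletion commutes with negation, and the set shatters all coordinates
but one of `W`, but not all `n` of them. -/

open Finset

section HypercubeFlips

variable {n : ℕ}

@[simp]
lemma flipC_apply_self (e : Fin n) (v : Fin n → Bool) : flipC e v e = !v e :=
  Function.update_self _ _ _

lemma flipC_apply_of_ne {e i : Fin n} (h : i ≠ e) (v : Fin n → Bool) : flipC e v i = v i :=
  Function.update_of_ne h _ _

lemma hammingDist_flipC_add_one {u v : Fin n → Bool} {e : Fin n} (h : u e ≠ v e) :
    hammingDist (flipC e u) v + 1 = hammingDist u v := by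
  have hfilter : ({i | flipC e u i ≠ v i} : Finset (Fin n)) =
      ({i | u i ≠ v i} : Finset _).erase e := by
    ext i
    by_cases hie : i = e
    · subst hie
      cases hu : u i <;> cases hv : v i <;> simp_all
    · simp [flipC_apply_of_ne hie, hie]
  rw [hammingDist, hammingDist, hfilter, card_erase_add_one (by simpa using h)]

lemma hammingDist_flipC_right (v : Fin n → Bool) (e : Fin n) : hammingDist v (flipC e v) = 1 := by
  simpa using (hammingDist_flipC_add_one (u := v) (v := flipC e v) (e := e) (by simp)).symm

lemma isPartialCube_of_exists_flipC_mem {S : Set (Fin n → Bool)} (hS : S.Nonempty)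
    (hstep : ∀ u ∈ S, ∀ v ∈ S, u ≠ v → ∃ e, u e ≠ v e ∧ flipC e u ∈ S) :
    IsPartialCube S := by
  refine ⟨hS, fun u hu v hv => ?_⟩
  suffices ∀ d, ∀ u ∈ S, hammingDist u v = d → ∃ w : ℕ → (Fin n → Bool), w 0 = u ∧ w d = v ∧
      (∀ k ≤ d, w k ∈ S) ∧ ∀ k < d, hammingDist (w k) (w (k + 1)) = 1 from this _ u hu rfl
  intro d
  induction d with
  | zero =>
    intro u hu huv
    exact ⟨fun _ => u, rfl, hammingDist_eq_zero.1 huv, fun _ _ => hu, fun _ h => (by omega)⟩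
  | succ d ih =>
    intro u hu huv
    obtain ⟨e, he, hflip⟩ := hstep u hu v hv (by rintro rfl; simp at huv)
    obtain ⟨w, hw0, hwd, hwS, hwstep⟩ :=
      ih _ hflip (by have := hammingDist_flipC_add_one he; omega)
    refine ⟨fun k => Nat.casesOn k u w, rfl, hwd, ?_, ?_⟩
    · rintro (_ | k) hk
      exacts [hu, hwS k (by omega)]
    · rintro (_ | k) hk
      · simpa [hw0] using hammingDist_flipC_right u e
      · exact hwstep k (by omega)

lemma degree_add_card_filter_flipC_notMem (S : Set (Fin n → Bool)) (v : Fin n → Bool) :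
    degree S v + ({e | flipC e v ∉ S} : Finset (Fin n)).card = n := by
  rw [degree, card_filter_add_card_filter_not, card_univ, Fintype.card_fin]

lemma mem_of_shatters_univ {S : Set (Fin n → Bool)} (h : Shatters S univ) (g : Fin n → Bool) :
    g ∈ S := by
  obtain ⟨v, hv, hvg⟩ := h g
  rwa [show v = g from funext fun i => hvg i (mem_univ i)] at hv

lemma isRank_of_shatters_erase {S : Set (Fin n → Bool)} {i : Fin n}
    (hS : Shatters S (univ.erase i)) {g : Fin n → Bool} (hg : g ∉ S) : IsRank S (n - 1) := by
  refine ⟨⟨_, by simp [card_erase_of_mem], hS⟩, fun F hF => ?_⟩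
  have hF_ne : F ≠ univ := by
    rintro rfl
    exact hg (mem_of_shatters_univ hF g)
  have := card_lt_card (ssubset_univ_iff.2 hF_ne)
  rw [card_univ, Fintype.card_fin] at this
  omega

end HypercubeFlips

section CubeMinusFlats

variable {n : ℕ} {W : Finset (Fin n)}

def cubeMinusFlats (W : Finset (Fin n)) : Set (Fin n → Bool) :=
  {v | ∀ b, (∀ i ∈ W, v i = b) → v = fun _ => b}

lemma const_mem_cubeMinusFlats (hW : W.Nonempty) (b : Bool) :
    (fun _ => b) ∈ cubeMinusFlats W := by
  intro b' h
  obtain ⟨i, hi⟩ := hW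
  funext
  exact h i hi

lemma mem_cubeMinusFlats_of_ne {v : Fin n → Bool} {i j : Fin n} (hi : i ∈ W) (hj : j ∈ W)
    (hij : v i ≠ v j) : v ∈ cubeMinusFlats W :=
  fun _ h => absurd ((h i hi).trans (h j hj).symm) hij

lemma negV_mem_cubeMinusFlats {v : Fin n → Bool} (hv : v ∈ cubeMinusFlats W) :
    negV v ∈ cubeMinusFlats W := by
  intro b h
  have hv' := hv (!b) fun i hi => by simpa [negV] using h i hi
  funext i
  simp [negV, hv']

lemma flipC_const_mem_cubeMinusFlats_iff (hW : W.Nontrivial) (b : Bool) (e : Fin n) :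
    flipC e (fun _ => b) ∈ cubeMinusFlats W ↔ e ∈ W := by
  constructor
  · intro h
    by_contra he
    have := congrFun (h b fun i hi => flipC_apply_of_ne (ne_of_mem_of_not_mem hi he) _) e
    simp at this
  · intro he
    obtain ⟨j, hj, hje⟩ := hW.exists_ne e
    exact mem_cubeMinusFlats_of_ne he hj (by simp [flipC_apply_of_ne hje])

lemma degree_const_cubeMinusFlats (hW : W.Nontrivial) (b : Bool) :
    degree (cubeMinusFlats W) (fun _ => b) = W.card := by
  rw [degree]
  congr 1
  ext e
  simp [flipC_const_mem_cubeMinusFlats_iff hW]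

lemma exists_of_flipC_notMem_cubeMinusFlats {v : Fin n → Bool} (hv : ∀ b, ¬∀ i ∈ W, v i = b)
    {e : Fin n} (h : flipC e v ∉ cubeMinusFlats W) :
    ∃ b, e ∈ W ∧ v e = !b ∧ ∀ i ∈ W, i ≠ e → v i = b := by
  obtain ⟨b, hb⟩ := not_forall.1 h
  obtain ⟨hb, -⟩ := Classical.not_imp.1 hb
  have hoff : ∀ i ∈ W, i ≠ e → v i = b := fun i hi hie => by
    rw [← hb i hi, flipC_apply_of_ne hie]
  have he : e ∈ W := by
    by_contra he
    exact hv b fun i hi => hoff i hi (ne_of_mem_of_not_mem hi he)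
  refine ⟨b, he, ?_, hoff⟩
  simpa using hb e he

lemma eq_of_flipC_notMem_cubeMinusFlats (hW : 3 ≤ W.card) {v : Fin n → Bool}
    (hv : ∀ b, ¬∀ i ∈ W, v i = b) {e₁ e₂ : Fin n} (h₁ : flipC e₁ v ∉ cubeMinusFlats W)
    (h₂ : flipC e₂ v ∉ cubeMinusFlats W) : e₁ = e₂ := by
  obtain ⟨b₁, he₁, -, hoff₁⟩ := exists_of_flipC_notMem_cubeMinusFlats hv h₁
  obtain ⟨b₂, he₂, hv₂, hoff₂⟩ := exists_of_flipC_notMem_cubeMinusFlats hv h₂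
  by_contra hne
  obtain ⟨m, hm⟩ : ((W.erase e₁).erase e₂).Nonempty := by
    rw [← card_pos, card_erase_of_mem (mem_erase.2 ⟨Ne.symm hne, he₂⟩), card_erase_of_mem he₁]
    omega
  simp only [mem_erase] at hm
  have hb : b₁ = b₂ := (hoff₁ m hm.2.2 hm.2.1).symm.trans (hoff₂ m hm.2.2 hm.1)
  have := hoff₁ e₂ he₂ (Ne.symm hne)
  rw [hv₂, hb] at this
  simp at this

lemma card_le_degree_cubeMinusFlats (hW : 3 ≤ W.card) (hWn : W.card < n) {v : Fin n → Bool}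
    (hv : v ∈ cubeMinusFlats W) : W.card ≤ degree (cubeMinusFlats W) v := by
  have hW' : W.Nontrivial := one_lt_card_iff_nontrivial.1 (by omega)
  by_cases hvc : ∃ b, ∀ i ∈ W, v i = b
  · obtain ⟨b, hb⟩ := hvc
    rw [hv b hb, degree_const_cubeMinusFlats hW']
  · have hbad : ({e | flipC e v ∉ cubeMinusFlats W} : Finset (Fin n)).card ≤ 1 :=
      card_le_one.2 fun e₁ h₁ e₂ h₂ =>
        eq_of_flipC_notMem_cubeMinusFlats hW (fun b hb => hvc ⟨b, hb⟩) (by simpa using h₁)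
          (by simpa using h₂)
    have := degree_add_card_filter_flipC_notMem (cubeMinusFlats W) v
    omega

lemma exists_flipC_mem_cubeMinusFlats (hW : 3 ≤ W.card) {u v : Fin n → Bool}
    (hu : u ∈ cubeMinusFlats W) (hv : v ∈ cubeMinusFlats W) (huv : u ≠ v) :
    ∃ e, u e ≠ v e ∧ flipC e u ∈ cubeMinusFlats W := by
  have hW' : W.Nontrivial := one_lt_card_iff_nontrivial.1 (by omega)
  by_cases huc : ∃ b, ∀ i ∈ W, u i = b
  · obtain ⟨b, hb⟩ := huc
    rw [hu b hb] at huv ⊢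
    obtain ⟨i, hi, hvi⟩ : ∃ i ∈ W, v i ≠ b := by
      by_contra! h
      exact huv (hv b h).symm
    exact ⟨i, Ne.symm hvi, (flipC_const_mem_cubeMinusFlats_iff hW' b i).2 hi⟩
  · obtain ⟨e₁, he₁⟩ := Function.ne_iff.1 huv
    by_cases h₁ : flipC e₁ u ∈ cubeMinusFlats W
    · exact ⟨e₁, he₁, h₁⟩
    obtain ⟨e₂, he₂⟩ := Function.ne_iff.1 (show flipC e₁ u ≠ v from fun h => h₁ (h ▸ hv))
    have hne : e₂ ≠ e₁ := by
      rintro rfl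
      rw [flipC_apply_self] at he₂
      cases u e₂ <;> cases v e₂ <;> simp_all
    rw [flipC_apply_of_ne hne] at he₂
    refine ⟨e₂, he₂, ?_⟩
    by_contra h₂
    exact hne (eq_of_flipC_notMem_cubeMinusFlats hW (fun b hb => huc ⟨b, hb⟩) h₂ h₁)

theorem isPartialCube_cubeMinusFlats (hW : 3 ≤ W.card) : IsPartialCube (cubeMinusFlats W) :=
  isPartialCube_of_exists_flipC_mem
    ⟨_, const_mem_cubeMinusFlats (card_pos.1 (by omega)) false⟩
    fun _ hu _ hv huv => exists_flipC_mem_cubeMinusFlats hW hu hv huv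

theorem isAntipodal_cubeMinusFlats (hW : W.Nonempty) : IsAntipodal (cubeMinusFlats W) :=
  ⟨fun _ => ⟨_, const_mem_cubeMinusFlats hW false, _, const_mem_cubeMinusFlats hW true,
      Bool.false_ne_true⟩,
    fun _ => negV_mem_cubeMinusFlats⟩

theorem isRank_cubeMinusFlats (hW : W.Nontrivial) (hWn : W.card < n) :
    IsRank (cubeMinusFlats W) (n - 1) := by
  obtain ⟨i, hi, j, hj, hij⟩ := id hW
  obtain ⟨e, -, he⟩ := exists_mem_notMem_of_card_lt_card (s := W) (t := univ) (by simpa using hWn)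
  have hmissing : flipC e (fun _ => false) ∉ cubeMinusFlats W :=
    mt (flipC_const_mem_cubeMinusFlats_iff hW _ _).1 he
  refine isRank_of_shatters_erase (i := i) (fun g => ?_) hmissing
  refine ⟨Function.update g i (!g j), mem_cubeMinusFlats_of_ne hi hj ?_,
    fun k hk => Function.update_of_ne (ne_of_mem_erase hk) _ _⟩
  simp [Function.update_of_ne (Ne.symm hij)]

end CubeMinusFlats

/-- for every `r ≥ 4` there is an antipodal partial cube of rank `r`
and minimum degree 4. -/
theorem stmt13 (r : ℕ) (hr : 4 ≤ r) :
    ∃ (n : ℕ) (S : Set (Fin n → Bool)),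
      IsPartialCube S ∧ IsAntipodal S ∧ IsRank S r ∧
      (∀ v ∈ S, 4 ≤ degree S v) ∧ ∃ v ∈ S, degree S v = 4 := by
  let W : Finset (Fin (r + 1)) := Iio ⟨4, by omega⟩
  have hW : W.card = 4 := Fin.card_Iio _
  have hW' : W.Nontrivial := one_lt_card_iff_nontrivial.1 (by omega)
  refine ⟨r + 1, cubeMinusFlats W, isPartialCube_cubeMinusFlats (by omega),
    isAntipodal_cubeMinusFlats hW'.nonempty, isRank_cubeMinusFlats hW' (by omega),
    fun v hv => hW ▸ card_le_degree_cubeMinusFlats (by omega) (by omega) hv,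
    _, const_mem_cubeMinusFlats hW'.nonempty false,
    (degree_const_cubeMinusFlats hW' false).trans hW⟩

end

end PartialCubesPaper
end

section
/- There exist n ∈ ℕ and an antipodal partial cube S ⊆ (Fin n → Bool) of isometric dimension n such that the rank of S equals 4 and the minimum degree of S equals 3 (every vertex of S has degree at least 3 and some vertex has degree exactly 3). -/
open scoped Classical

namespace PartialCubesPaper

noncomputable section

/-!
The example is the subset of `Q_5` formed by the radius-2 ball around `0` in the facet
`v 4 = false` and its antipode in the opposite facet: 22 vertices, shattering the first four
coordinates but not all five, with degree 3 exactly on the boundary spheres of the two balls.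
Everything is decided by evaluation once being a partial cube is reduced to the local condition
that every vertex has a neighbour in `S` one step closer to any given target in `S`.
-/

theorem isPartialCube_of_exists_step {n : ℕ} {S : Set (Fin n → Bool)} (hS : S.Nonempty)
    (step : ∀ u ∈ S, ∀ v ∈ S, u ≠ v →
      ∃ u' ∈ S, hammingDist u u' = 1 ∧ hammingDist u' v + 1 = hammingDist u v) :
    IsPartialCube S := by
  refine ⟨hS, fun u hu v hv => ?_⟩
  induction hd : hammingDist u v generalizing u with
  | zero =>
    obtain rfl : u = v := hammingDist_eq_zero.1 hd
    exact ⟨fun _ => u, rfl, rfl, fun _ _ => hu, fun k hk => absurd hk (Nat.not_lt_zero k)⟩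
  | succ d ih =>
    obtain ⟨u', hu', hstep, hdist⟩ := step u hu v hv (by rintro rfl; simp at hd)
    obtain ⟨w, hw0, hwd, hwS, hwstep⟩ := ih u' hu' (by omega)
    refine ⟨fun | 0 => u | k + 1 => w k, rfl, hwd, ?_, ?_⟩
    · rintro (_ | k) hk
      exacts [hu, hwS k (by omega)]
    · rintro (_ | k) hk
      · simpa [hw0] using hstep
      · exact hwstep k (by omega)

theorem eq_univ_of_shatters_univ {n : ℕ} {S : Set (Fin n → Bool)}
    (hS : Shatters S Finset.univ) : S = Set.univ := by
  refine Set.eq_univ_of_forall fun v => ?_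
  obtain ⟨w, hw, hwv⟩ := hS v
  rwa [← funext fun i => hwv i (Finset.mem_univ i)]

theorem isRank_of_shatters_of_ne_univ {n : ℕ} {S : Set (Fin (n + 1) → Bool)}
    {F : Finset (Fin (n + 1))} (hF : F.card = n) (hS : Shatters S F) (hne : S ≠ Set.univ) :
    IsRank S n := by
  refine ⟨⟨F, hF, hS⟩, fun G hG => ?_⟩
  by_contra! hlt
  have hG_univ : G = Finset.univ :=
    Finset.eq_univ_of_card G (le_antisymm (by simpa using G.card_le_univ) (by simpa using hlt))
  exact hne (eq_univ_of_shatters_univ (hG_univ ▸ hG))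

-- `degree` filters with the classical instance, on which `decide` gets stuck.
theorem degree_eq_card_filter {n : ℕ} (S : Set (Fin n → Bool)) [DecidablePred (· ∈ S)]
    (v : Fin n → Bool) : degree S v = (Finset.univ.filter fun e => flipC e v ∈ S).card := by
  unfold degree
  congr 1
  exact Finset.filter_congr_decidable _ _ _

def headWeight (v : Fin 5 → Bool) : ℕ :=
  (List.ofFn fun i : Fin 4 => v i.castSucc).count true

def twoBalls : Set (Fin 5 → Bool) :=
  {v | v 4 = false ∧ headWeight v ≤ 2 ∨ v 4 = true ∧ 2 ≤ headWeight v}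

instance : DecidablePred (· ∈ twoBalls) := fun v =>
  inferInstanceAs (Decidable (v 4 = false ∧ headWeight v ≤ 2 ∨ v 4 = true ∧ 2 ≤ headWeight v))

theorem twoBalls_isPartialCube : IsPartialCube twoBalls :=
  isPartialCube_of_exists_step ⟨fun _ => false, by decide⟩ (by decide)

theorem twoBalls_isAntipodal : IsAntipodal twoBalls :=
  ⟨fun e => by revert e; unfold NonConst; decide, by decide⟩

theorem twoBalls_isRank : IsRank twoBalls 4 := by
  refine isRank_of_shatters_of_ne_univ (F := ({0, 1, 2, 3} : Finset (Fin 5))) rfl ?_ ?_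
  · -- restated over `Fin 5`, where the `DecidablePred` instance of `twoBalls` is found
    show ∀ g : Fin 5 → Bool, ∃ v ∈ twoBalls, ∀ i ∈ ({0, 1, 2, 3} : Finset (Fin 5)), v i = g i
    decide
  · exact (Set.ne_univ_iff_exists_notMem _).2 ⟨![false, false, false, false, true], by decide⟩

theorem three_le_degree_twoBalls : ∀ v ∈ twoBalls, 3 ≤ degree twoBalls v := by
  simp only [degree_eq_card_filter]
  decide

theorem degree_twoBalls_eq_three :
    degree twoBalls ![true, true, false, false, false] = 3 := by
  rw [degree_eq_card_filter]
  decide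

/-- there is an antipodal partial cube of rank 4 and minimum degree 3. -/
theorem stmt14 :
    ∃ (n : ℕ) (S : Set (Fin n → Bool)),
      IsPartialCube S ∧ IsAntipodal S ∧ IsRank S 4 ∧
      (∀ v ∈ S, 3 ≤ degree S v) ∧ ∃ v ∈ S, degree S v = 3 :=
  ⟨5, twoBalls, twoBalls_isPartialCube, twoBalls_isAntipodal, twoBalls_isRank,
    three_le_degree_twoBalls, _, by decide, degree_twoBalls_eq_three⟩

end

end PartialCubesPaper
end

section
/- Let S ⊆ (Fin n → Bool) be an antipodal partial cube of isometric dimension n and rank r, and let e be a coordinate. Then the halfspace E_e^+ = {v ∈ S : v e = true} (an affine partial cube) has rank at most r − 1, where the rank of E_e^+ is the VC dimension of the corresponding set family on Fin n. -/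
open scoped Classical

namespace PartialCubesPaper

noncomputable section

theorem notMem_of_shatters_halfspace {n : ℕ} {S : Set (Fin n → Bool)} {e : Fin n} {b : Bool}
    {F : Finset (Fin n)} (hF : Shatters (halfspace S e b) F) : e ∉ F := by
  intro heF
  obtain ⟨v, ⟨-, hve⟩, hvF⟩ := hF fun _ => !b
  simpa [hve] using hvF e heF

/-- A vertex of the halfspace realizes the patterns `g` with `g e = b`; the antipode of a
vertex realizing `negV g` realizes the others. -/
theorem shatters_insert_of_shatters_halfspace {n : ℕ} {S : Set (Fin n → Bool)}
    (hneg : ∀ v ∈ S, negV v ∈ S) {e : Fin n} {b : Bool} {F : Finset (Fin n)}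
    (hF : Shatters (halfspace S e b) F) : Shatters S (insert e F) := by
  intro g
  by_cases hge : g e = b
  · obtain ⟨v, ⟨hvS, hve⟩, hvF⟩ := hF g
    refine ⟨v, hvS, fun i hi => ?_⟩
    rcases Finset.mem_insert.mp hi with rfl | hi
    · rw [hve, hge]
    · exact hvF i hi
  · obtain ⟨v, ⟨hvS, hve⟩, hvF⟩ := hF (negV g)
    refine ⟨negV v, hneg v hvS, fun i hi => ?_⟩
    rcases Finset.mem_insert.mp hi with rfl | hi
    · simp only [negV, hve]
      exact (Bool.eq_not_of_ne hge).symm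
    · simp [negV, hvF i hi]

theorem stmt15_general {n r : ℕ} (S : Set (Fin n → Bool))
    (hant : IsAntipodal S) (hr : IsRank S r) (e : Fin n) :
    ∀ r', IsRank (halfspace S e true) r' → r' < r := by
  rintro r' ⟨⟨F, rfl, hF⟩, -⟩
  have hcard := hr.2 _ (shatters_insert_of_shatters_halfspace hant.2 hF)
  rw [Finset.card_insert_of_notMem (notMem_of_shatters_halfspace hF)] at hcard
  omega

/-- a halfspace of an antipodal partial cube of rank `r` has rank
at most `r - 1`. -/
theorem stmt15 {n r : ℕ} (S : Set (Fin n → Bool))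
    (hpc : IsPartialCube S) (hant : IsAntipodal S) (hr : IsRank S r) (e : Fin n) :
    ∀ r', IsRank (halfspace S e true) r' → r' < r :=
  stmt15_general S hant hr e

end

end PartialCubesPaper
end

section
/- Let G ⊆ (Fin n → Bool) be an affine partial cube and let e be a coordinate non-constant on G. Then A(π_e(G)) = π_e(A(G)): the set of antipodes of the contraction π_e(G) equals the image under π_e of the set of antipodes of G. -/
open scoped Classical

namespace PartialCubesPaper

noncomputable section

/-! A vertex `u` of `G` is an antipode exactly when `negOn G u`, its negation on the
coordinates that are non-constant on `G`, lies in `G`, and `negOn` commutes with deleting a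
coordinate and with flipping one. So an antipode of `π_e(G)` lifts to some `u ∈ G` with
`negOn G u ∈ G`, or with `flip_e (negOn G u) = negOn G (flip_e u) ∈ G`; then `flip_e u` is an
antipode of `G` unless it lies outside `G`, and in that case affinity forces `negOn G u ∈ G`. -/

section

variable {m : ℕ}

lemma hammingDist_add_hammingDist_eq_iff {ι β : Type*} [Fintype ι] [DecidableEq β]
    {u v w : ι → β} :
    hammingDist u v + hammingDist v w = hammingDist u w ↔ ∀ i, v i = u i ∨ v i = w i := by
  have hle : ∀ i ∈ Finset.univ, (if u i ≠ w i then 1 else 0) ≤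
      (if u i ≠ v i then 1 else 0) + (if v i ≠ w i then 1 else 0) := by
    intro i _
    split_ifs <;> simp_all
  simp only [hammingDist, Finset.card_filter, ← Finset.sum_add_distrib]
  rw [eq_comm, Finset.sum_eq_sum_iff_of_le hle]
  simp only [Finset.mem_univ, true_implies]
  refine forall_congr' fun i => ?_
  by_cases h₁ : v i = u i <;> by_cases h₂ : v i = w i <;> split_ifs <;> simp_all [eq_comm]

lemma hammingDist_le_of_walk (p : ℕ → Fin m → Bool) (i j : ℕ)
    (hstep : ∀ k < j, hammingDist (p (i + k)) (p (i + k + 1)) ≤ 1) :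
    hammingDist (p i) (p (i + j)) ≤ j := by
  induction j with
  | zero => simp
  | succ j ih =>
    calc hammingDist (p i) (p (i + (j + 1)))
        ≤ hammingDist (p i) (p (i + j)) + hammingDist (p (i + j)) (p (i + j + 1)) :=
          hammingDist_triangle _ _ _
      _ ≤ j + 1 := add_le_add (ih fun k hk => hstep k (by omega)) (hstep j (by omega))

lemma exists_eq_flipC_of_hammingDist_eq_one {u v : Fin m → Bool}
    (h : hammingDist u v = 1) : ∃ j, v = flipC j u := by
  obtain ⟨j, hj⟩ := Finset.card_eq_one.1 h
  have hdiff : ∀ i, u i ≠ v i ↔ i = j := fun i => by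
    simpa using Finset.ext_iff.1 hj i
  refine ⟨j, funext fun i => ?_⟩
  by_cases hij : i = j
  · subst hij
    have := (hdiff i).2 rfl
    cases hui : u i <;> simp_all [flipC]
  · simpa [flipC, hij] using (not_not.1 (mt (hdiff i).1 hij)).symm

lemma IsPartialCube.exists_flipC_mem_of_ne {S : Set (Fin m → Bool)}
    (hS : IsPartialCube S) {u x : Fin m → Bool} (hu : u ∈ S) (hx : x ∈ S) (hne : u ≠ x) :
    ∃ j, u j ≠ x j ∧ flipC j u ∈ S := by
  obtain ⟨p, hp0, hpd, hpS, hstep⟩ := hS.2 u hu x hx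
  set d := hammingDist u x
  have hd : 0 < d := hammingDist_pos.2 hne
  have hfirst : hammingDist u (p 1) = 1 := hp0 ▸ hstep 0 hd
  have hrest : hammingDist (p 1) x ≤ d - 1 := by
    have := hammingDist_le_of_walk p 1 (d - 1) fun k hk => (hstep (1 + k) (by omega)).le
    rwa [show 1 + (d - 1) = d by omega, hpd] at this
  have hbetween : hammingDist u (p 1) + hammingDist (p 1) x = d :=
    le_antisymm (by omega) (hammingDist_triangle _ _ _)
  obtain ⟨j, hj⟩ := exists_eq_flipC_of_hammingDist_eq_one hfirst
  refine ⟨j, fun huj => ?_, hj ▸ hpS 1 hd⟩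
  have := hammingDist_add_hammingDist_eq_iff.1 hbetween j
  rw [hj] at this
  cases huj' : u j <;> simp_all [flipC]

lemma negOn_apply_of_nonConst {T : Set (Fin m → Bool)} {i : Fin m} (h : NonConst T i)
    (v : Fin m → Bool) : negOn T v i = !(v i) := if_pos h

lemma eq_of_not_nonConst {T : Set (Fin m → Bool)} {i : Fin m} (h : ¬ NonConst T i)
    {a b : Fin m → Bool} (ha : a ∈ T) (hb : b ∈ T) : a i = b i :=
  not_not.1 fun hab => h ⟨a, ha, b, hb, hab⟩

lemma mem_antipodes_iff {T : Set (Fin m → Bool)} {u : Fin m → Bool} :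
    u ∈ antipodes T ↔ u ∈ T ∧ negOn T u ∈ T := by
  refine and_congr_right fun hu =>
    ⟨fun ⟨w, hw, hbetween⟩ => ?_, fun h => ⟨_, h, fun v hv => ?_⟩⟩
  · suffices negOn T u = w from this ▸ hw
    funext i
    by_cases hi : NonConst T i
    · obtain ⟨a, ha, b, hb, hab⟩ := hi
      have ha' := hammingDist_add_hammingDist_eq_iff.1 (hbetween a ha) i
      have hb' := hammingDist_add_hammingDist_eq_iff.1 (hbetween b hb) i
      rw [negOn_apply_of_nonConst ⟨a, ha, b, hb, hab⟩]
      cases h₁ : u i <;> cases h₂ : w i <;> cases h₃ : a i <;> cases h₄ : b i <;> simp_all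
    · simp only [negOn, if_neg hi]
      exact eq_of_not_nonConst hi hu hw
  · refine hammingDist_add_hammingDist_eq_iff.2 fun i => ?_
    by_cases hi : NonConst T i
    · rw [negOn_apply_of_nonConst hi]
      cases u i <;> cases v i <;> simp
    · exact .inl (eq_of_not_nonConst hi hv hu)

lemma negOn_flipC (T : Set (Fin m → Bool)) (e : Fin m) (u : Fin m → Bool) :
    negOn T (flipC e u) = flipC e (negOn T u) := by
  funext i
  by_cases hi : i = e
  · subst hi
    simp only [negOn, flipC, Function.update_self]
    split_ifs <;> rfl
  · simp only [negOn, flipC, Function.update_of_ne hi]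

lemma negOn_eq_negV {T : Set (Fin m → Bool)} {u : Fin m → Bool} (hu : u ∈ T)
    (hneg : negV u ∈ T) : negOn T u = negV u :=
  funext fun i => if_pos ⟨u, hu, negV u, hneg, by simp [negV]⟩

lemma delCoord_eq_removeNth (e : Fin (m + 1)) : delCoord e = Fin.removeNth e := rfl

lemma nonConst_image_delCoord_iff (T : Set (Fin (m + 1) → Bool)) (e : Fin (m + 1))
    (i : Fin m) : NonConst (delCoord e '' T) i ↔ NonConst T (e.succAbove i) := by
  simp [NonConst, delCoord]

lemma delCoord_negOn (T : Set (Fin (m + 1) → Bool)) (e : Fin (m + 1))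
    (u : Fin (m + 1) → Bool) :
    delCoord e (negOn T u) = negOn (delCoord e '' T) (delCoord e u) := by
  funext i
  simp only [delCoord, negOn, nonConst_image_delCoord_iff]

lemma delCoord_eq_delCoord_iff (e : Fin (m + 1)) (a b : Fin (m + 1) → Bool) :
    delCoord e a = delCoord e b ↔ a = b ∨ a = flipC e b := by
  refine ⟨fun h => ?_, ?_⟩
  · have hoff : ∀ i, i ≠ e → a i = b i := fun i hi => by
      obtain ⟨j, rfl⟩ := Fin.exists_succAbove_eq hi
      exact congrFun h j
    by_cases hab : a e = b e
    · refine .inl (funext fun i => ?_)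
      by_cases hi : i = e
      · exact hi ▸ hab
      · exact hoff i hi
    · refine .inr (funext fun i => ?_)
      by_cases hi : i = e
      · subst hi
        cases ha : a i <;> simp_all [flipC]
      · simp [flipC, Function.update_of_ne hi, hoff i hi]
  · rintro (rfl | rfl)
    · rfl
    · funext j
      simp [delCoord, flipC, Fin.succAbove_ne]

lemma mem_image_delCoord_halfspace_iff (H : Set (Fin (m + 1) → Bool))
    (f : Fin (m + 1)) (b : Bool) (u : Fin m → Bool) :
    u ∈ delCoord f '' halfspace H f b ↔ Fin.insertNth f b u ∈ H := by
  constructor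
  · rintro ⟨v, ⟨hv, rfl⟩, rfl⟩
    rwa [delCoord_eq_removeNth, Fin.insertNth_self_removeNth]
  · exact fun h => ⟨_, ⟨h, Fin.insertNth_apply_same ..⟩, Fin.removeNth_insertNth ..⟩

lemma negV_insertNth (f : Fin (m + 1)) (b : Bool) (u : Fin m → Bool) :
    negV (Fin.insertNth f b u) = Fin.insertNth f (!b) (negV u) := by
  rw [Fin.eq_insertNth_iff]
  exact ⟨by simp [negV], funext fun j => by simp [Fin.removeNth, negV]⟩

/-- Lift `u` and `w` to the antipodal partial cube `H`, on the side `f = true`, and take the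
first step of a geodesic from `u` to the antipode of `w`: it either crosses `f`, which puts the
antipode of `u` into `G`, or it flips a coordinate of `u` on which `u` and `w` agree. -/
lemma IsAffine.negV_mem_or_exists_flipC_mem {G : Set (Fin m → Bool)} (hG : IsAffine G)
    {u w : Fin m → Bool} (hu : u ∈ G) (hw : w ∈ G) :
    negV u ∈ G ∨ ∃ j, u j = w j ∧ flipC j u ∈ G := by
  obtain ⟨H, f, hH, ⟨-, hHneg⟩, rfl⟩ := hG
  simp only [mem_image_delCoord_halfspace_iff] at hu hw ⊢
  have hx := hHneg _ hw
  rw [negV_insertNth, Bool.not_true] at hx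
  have hne : Fin.insertNth (α := fun _ => Bool) f true u ≠ Fin.insertNth f false (negV w) :=
    fun h => by simpa using congrFun h f
  obtain ⟨j, hj, hjH⟩ := hH.exists_flipC_mem_of_ne hu hx hne
  rcases Fin.eq_self_or_eq_succAbove f j with rfl | ⟨j, rfl⟩
  · left
    simpa [flipC, negV_insertNth] using hHneg _ hjH
  · right
    refine ⟨j, ?_, ?_⟩
    · simpa [negV] using hj
    · rwa [flipC, Fin.insertNth_apply_succAbove, ← Fin.insertNth_update] at hjH

lemma IsAffine.negOn_mem_of_flipC_negOn_mem {G : Set (Fin m → Bool)} (hG : IsAffine G)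
    {u : Fin m → Bool} {e : Fin m} (hu : u ∈ G) (hw : flipC e (negOn G u) ∈ G)
    (hflip : flipC e u ∉ G) : negOn G u ∈ G := by
  rcases hG.negV_mem_or_exists_flipC_mem hu hw with hneg | ⟨j, hj, hjG⟩
  · rwa [negOn_eq_negV hu hneg]
  · have hjnc : NonConst G j := ⟨flipC j u, hjG, u, hu, by simp [flipC]⟩
    have hje : j ≠ e := by rintro rfl; exact hflip hjG
    simp [flipC, Function.update_of_ne hje, negOn_apply_of_nonConst hjnc] at hj

lemma image_delCoord_antipodes_subset (T : Set (Fin (m + 1) → Bool)) (e : Fin (m + 1)) :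
    delCoord e '' antipodes T ⊆ antipodes (delCoord e '' T) := by
  rintro _ ⟨u, hu, rfl⟩
  rw [mem_antipodes_iff] at hu ⊢
  exact ⟨⟨u, hu.1, rfl⟩, ⟨_, hu.2, delCoord_negOn T e u⟩⟩

lemma IsAffine.antipodes_image_delCoord_subset {G : Set (Fin (m + 1) → Bool)}
    (hG : IsAffine G) (e : Fin (m + 1)) :
    antipodes (delCoord e '' G) ⊆ delCoord e '' antipodes G := by
  intro u' hu'
  obtain ⟨⟨u, hu, rfl⟩, w, hw, hwu⟩ := mem_antipodes_iff.1 hu'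
  rw [← delCoord_negOn, delCoord_eq_delCoord_iff] at hwu
  rcases hwu with rfl | rfl
  · exact ⟨u, mem_antipodes_iff.2 ⟨hu, hw⟩, rfl⟩
  by_cases hflip : flipC e u ∈ G
  · refine ⟨flipC e u, mem_antipodes_iff.2 ⟨hflip, negOn_flipC G e u ▸ hw⟩, ?_⟩
    exact (delCoord_eq_delCoord_iff e _ _).2 (.inr rfl)
  · exact ⟨u, mem_antipodes_iff.2 ⟨hu, hG.negOn_mem_of_flipC_negOn_mem hu hw hflip⟩, rfl⟩

end

theorem stmt16_general {n : ℕ} (G : Set (Fin (n + 1) → Bool))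
    (haff : IsAffine G) (e : Fin (n + 1)) :
    antipodes (delCoord e '' G) = delCoord e '' antipodes G :=
  (haff.antipodes_image_delCoord_subset e).antisymm (image_delCoord_antipodes_subset G e)

/-- antipodes commute with contraction in affine partial cubes. -/
theorem stmt16 {n : ℕ} (G : Set (Fin (n + 1) → Bool))
    (hpc : IsPartialCube G) (haff : IsAffine G) (e : Fin (n + 1))
    (he : NonConst G e) :
    antipodes (delCoord e '' G) = delCoord e '' antipodes G :=
  stmt16_general G haff e

end

end PartialCubesPaper
end
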